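/- arXiv:1108.3768 — 9 statements merged into one kernel-verified Lean document; each statement's English description precedes it below -/
import Mathlib

section
/- Fix real parameters p, r with 0 < r < p < 1, define b_{0,l} = (r − r(p−r)^l)/(1+r−p) for integers l ≥ 1, and define V(ω,l) = (b_{0,l} + ω(1−p)(l−1)) / (b_{0,l} + (1−p)l) for ω ∈ ℝ and integer l ≥ 1. Then for every integer l ≥ 1: (i) the quantity 1 − p + (b_{0,l} − b_{0,l+1})·l + b_{0,l+1} is strictly positive, and (ii) the number W(l) = ((b_{0,l} − b_{0,l+1})(l+1) + b_{0,l+1}) / (1 − p + (b_{0,l} − b_{0,l+1})·l + b_{0,l+1}) is the unique real solution ω of the indifference equation V(ω,l) = V(ω,l+1). -/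
/-!
Write `q = p - r ∈ (0, 1)`, so that `b_{0,l} = r (1 - q^l) / (1 - q)` and `b_{0,l+1} - b_{0,l} = r q^l`.
Cross-multiplying the indifference equation `V(ω,l) = V(ω,l+1)` turns it into the linear equation
`(1 - p) (N - ω D) = 0`, where `N / D` is the claimed formula for `W(l)`; so everything hinges on
`D > 0`. In fact `D ≥ 1 - p + r`, which after clearing `1 - q` is the elementary inequality
`l q^l (1 - q) ≤ q - q^(l+1)`, i.e. `q + ⋯ + q^l ≥ l q^l`.
-/

lemma nat_mul_pow_mul_one_sub_le {q : ℝ} (hq₀ : 0 ≤ q) (hq₁ : q ≤ 1) (n : ℕ) :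
    (n : ℝ) * q ^ n * (1 - q) ≤ q - q ^ (n + 1) := by
  induction n with
  | zero => simp
  | succ n ih =>
    have hpow : q ^ (n + 1) ≤ q ^ n := pow_le_pow_of_le_one hq₀ hq₁ n.le_succ
    have hgap : 0 ≤ 1 - q := sub_nonneg.2 hq₁
    calc ((n + 1 : ℕ) : ℝ) * q ^ (n + 1) * (1 - q)
        = n * q ^ (n + 1) * (1 - q) + q ^ (n + 1) * (1 - q) := by push_cast; ring
      _ ≤ n * q ^ n * (1 - q) + q ^ (n + 1) * (1 - q) := by gcongr
      _ ≤ (q - q ^ (n + 1)) + q ^ (n + 1) * (1 - q) := by gcongr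
      _ = q - q ^ (n + 1 + 1) := by ring

/-- Cross-multiplied, the indifference equation between the thresholds `n` and `n + 1`
(with beliefs `x` and `y` and `a = 1 - p`) is linear in `ω`. -/
lemma indifference_iff {a x y n ω : ℝ} (ha : a ≠ 0) (hx : x + a * n ≠ 0)
    (hy : y + a * (n + 1) ≠ 0) (hD : a + (x - y) * n + y ≠ 0) :
    (x + ω * a * (n - 1)) / (x + a * n) = (y + ω * a * (n + 1 - 1)) / (y + a * (n + 1)) ↔
      ω = ((x - y) * (n + 1) + y) / (a + (x - y) * n + y) := by
  rw [div_eq_div_iff hx hy, eq_div_iff hD]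
  have hlin : (x + ω * a * (n - 1)) * (y + a * (n + 1)) - (y + ω * a * (n + 1 - 1)) * (x + a * n)
      = a * (((x - y) * (n + 1) + y) - ω * (a + (x - y) * n + y)) := by ring
  rw [← sub_eq_zero, hlin, mul_eq_zero, sub_eq_zero, eq_comm (a := (x - y) * (n + 1) + y)]
  exact or_iff_right ha

section Belief

variable {p r : ℝ} {b : ℕ → ℝ} (hb : ∀ l, b l = (r - r * (p - r) ^ l) / (1 + r - p))
include hb

lemma belief_nonneg (hr : 0 ≤ r) (hrp : r ≤ p) (hp : p < 1 + r) (l : ℕ) : 0 ≤ b l := by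
  rw [hb]
  have hpow : (p - r) ^ l ≤ 1 := pow_le_one₀ (sub_nonneg.2 hrp) (by linarith)
  exact div_nonneg (by nlinarith) (by linarith)

lemma belief_succ_sub (hp : p ≠ 1 + r) (l : ℕ) : b (l + 1) - b l = r * (p - r) ^ l := by
  rw [hb, hb, ← sub_div, div_eq_iff (by contrapose! hp; linarith)]
  ring

lemma one_sub_add_le_index_denom (hr : 0 ≤ r) (hrp : r ≤ p) (hp : p < 1 + r) (l : ℕ) :
    1 - p + r ≤ 1 - p + (b l - b (l + 1)) * l + b (l + 1) := by
  have hgap : 0 < 1 + r - p := by linarith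
  have hsucc : b (l + 1) * (1 + r - p) = r - r * (p - r) ^ (l + 1) := by
    rw [hb]; field_simp
  have hkey := mul_le_mul_of_nonneg_left
    (nat_mul_pow_mul_one_sub_le (sub_nonneg.2 hrp) (by linarith) l) hr
  rw [← neg_sub (b (l + 1)), belief_succ_sub hb hp.ne l]
  suffices 0 ≤ (b (l + 1) - r - r * (p - r) ^ l * l) * (1 + r - p) by
    nlinarith
  nlinarith

end Belief

/-- The Whittle index `W(l)` is the unique subsidy `ω` solving the indifference
equation `V(ω,l) = V(ω,l+1)` between the threshold policies at `b_{0,l}` and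
`b_{0,l+1}`, and the denominator in its expression is strictly positive. -/
theorem stmt_8 (p r : ℝ) (hr : 0 < r) (hrp : r < p) (hp : p < 1)
    (b : ℕ → ℝ) (hb : ∀ l, b l = (r - r * (p - r) ^ l) / (1 + r - p))
    (V : ℝ → ℕ → ℝ)
    (hV : ∀ (ω : ℝ) (l : ℕ), V ω l = (b l + ω * (1 - p) * ((l : ℝ) - 1)) / (b l + (1 - p) * (l : ℝ)))
    (W : ℕ → ℝ)
    (hW : ∀ l, W l = ((b l - b (l + 1)) * ((l : ℝ) + 1) + b (l + 1)) /
      (1 - p + (b l - b (l + 1)) * (l : ℝ) + b (l + 1))) :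
    ∀ l : ℕ, 1 ≤ l →
      0 < 1 - p + (b l - b (l + 1)) * (l : ℝ) + b (l + 1) ∧
      (∀ ω : ℝ, V ω l = V ω (l + 1) ↔ ω = W l) := by
  intro l hl
  have hp' : p < 1 + r := by linarith
  have hD := one_sub_add_le_index_denom hb hr.le hrp.le hp' l
  have hbl := belief_nonneg hb hr.le hrp.le hp' l
  have hbl' := belief_nonneg hb hr.le hrp.le hp' (l + 1)
  have hl' : (1 : ℝ) ≤ l := by exact_mod_cast hl
  refine ⟨by linarith, fun ω => ?_⟩
  rw [hV, hV, hW, Nat.cast_succ]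
  exact indifference_iff (by linarith) (by nlinarith) (by nlinarith) (by linarith)
end

section
/- Fix real parameters p, r with 0 < r < p < 1, define b_{0,l} = (r − r(p−r)^l)/(1+r−p) for integers l ≥ 1, and define the Whittle index W(l) = ((b_{0,l} − b_{0,l+1})(l+1) + b_{0,l+1}) / (1 − p + (b_{0,l} − b_{0,l+1})·l + b_{0,l+1}). Then for every integer l ≥ 1, 0 ≤ W(l) ≤ 1, the sequence (W(l)) is monotonically increasing in l, and W(l) ≤ r/((1−p)(1+r−p)+r) for all l. -/
/-! With `q = p - r ∈ (0, 1)` one has `b_l - b_{l+1} = -r q^l`, and the numerator of `W(l)` is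
`N_l = r (1 - q) ∑_{k < l} (k + 1) q^k`, while the denominator is `N_l + c_l` with
`c_l = 1 - p + r q^l > 0`. So `W(l) = N_l / (N_l + c_l)`, where `N_l ≥ 0` increases in `l` and is
bounded by `r / (1 - q)`, and `c_l` decreases to `1 - p`. Since `x / (x + c)` is increasing in `x ≥ 0`
and decreasing in `c > 0`, all three claims follow. -/

open Finset

lemma div_add_le_div_add {x y c d : ℝ} (hx : 0 ≤ x) (hxy : x ≤ y) (hd : 0 < d) (hdc : d ≤ c) :
    x / (x + c) ≤ y / (y + d) := by
  rw [div_le_div_iff₀ (by linarith) (by linarith)]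
  nlinarith [mul_le_mul_of_nonneg_left hdc (hx.trans hxy)]

lemma one_sub_sq_mul_sum_range_succ_mul_pow {R : Type*} [CommRing R] (q : R) (l : ℕ) :
    (1 - q) ^ 2 * ∑ k ∈ range l, ((k : R) + 1) * q ^ k =
      1 - ((l : R) + 1) * q ^ l + l * q ^ (l + 1) := by
  induction l with
  | zero => simp
  | succ l ih =>
    rw [sum_range_succ, mul_add, ih]
    push_cast
    ring

lemma one_sub_sq_mul_sum_range_succ_mul_pow_le_one {q : ℝ} (hq0 : 0 ≤ q) (hq1 : q ≤ 1) (l : ℕ) :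
    (1 - q) ^ 2 * ∑ k ∈ range l, ((k : ℝ) + 1) * q ^ k ≤ 1 := by
  rw [one_sub_sq_mul_sum_range_succ_mul_pow, pow_succ]
  have : 0 ≤ q ^ l * ((l + 1) - l * q) := mul_nonneg (pow_nonneg hq0 l) (by nlinarith)
  nlinarith

noncomputable def whittleNumerator (p r : ℝ) (l : ℕ) : ℝ :=
  r * (1 - (p - r)) * ∑ k ∈ range l, ((k : ℝ) + 1) * (p - r) ^ k

section whittleNumerator

variable {p r : ℝ}

lemma whittleNumerator_nonneg (hr : 0 ≤ r) (hq0 : 0 ≤ p - r) (hq1 : p - r ≤ 1) (l : ℕ) :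
    0 ≤ whittleNumerator p r l := by
  have : 0 ≤ 1 - (p - r) := by linarith
  unfold whittleNumerator
  positivity

lemma whittleNumerator_le_succ (hr : 0 ≤ r) (hq0 : 0 ≤ p - r) (hq1 : p - r ≤ 1) (l : ℕ) :
    whittleNumerator p r l ≤ whittleNumerator p r (l + 1) := by
  have : 0 ≤ 1 - (p - r) := by linarith
  unfold whittleNumerator
  gcongr
  exact l.le_succ

lemma whittleNumerator_le (hr : 0 ≤ r) (hq0 : 0 ≤ p - r) (hq1 : p - r < 1) (l : ℕ) :
    whittleNumerator p r l ≤ r / (1 - (p - r)) := by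
  have hpos : 0 < 1 - (p - r) := by linarith
  rw [le_div_iff₀ hpos, whittleNumerator]
  have := one_sub_sq_mul_sum_range_succ_mul_pow_le_one hq0 hq1.le l
  nlinarith

end whittleNumerator

lemma whittle_eq_div_add (p r : ℝ) (hq1 : p - r ≠ 1)
    (b : ℕ → ℝ) (hb : ∀ l, b l = (r - r * (p - r) ^ l) / (1 + r - p))
    (W : ℕ → ℝ)
    (hW : ∀ l, W l = ((b l - b (l + 1)) * ((l : ℝ) + 1) + b (l + 1)) /
      (1 - p + (b l - b (l + 1)) * (l : ℝ) + b (l + 1))) (l : ℕ) :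
    W l = whittleNumerator p r l / (whittleNumerator p r l + (1 - p + r * (p - r) ^ l)) := by
  have hsub : (1 : ℝ) + r - p = 1 - (p - r) := by ring
  have hne : (1 : ℝ) - (p - r) ≠ 0 := sub_ne_zero.mpr (Ne.symm hq1)
  have hN : whittleNumerator p r l * (1 - (p - r)) =
      r * (1 - ((l : ℝ) + 1) * (p - r) ^ l + l * (p - r) ^ (l + 1)) := by
    rw [whittleNumerator]
    linear_combination r * one_sub_sq_mul_sum_range_succ_mul_pow (p - r) l
  rw [hW, hb, hb, hsub]
  congr 1
  · field_simp
    linear_combination (-1 : ℝ) * hN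
  · field_simp
    linear_combination (-1 : ℝ) * hN

/-- The Whittle index values `W(l)` lie in `[0,1]`, are monotonically increasing in `l`,
and are bounded above by `r/((1-p)(1+r-p)+r)`. -/
theorem stmt_9 (p r : ℝ) (hr : 0 < r) (hrp : r < p) (hp : p < 1)
    (b : ℕ → ℝ) (hb : ∀ l, b l = (r - r * (p - r) ^ l) / (1 + r - p))
    (W : ℕ → ℝ)
    (hW : ∀ l, W l = ((b l - b (l + 1)) * ((l : ℝ) + 1) + b (l + 1)) /
      (1 - p + (b l - b (l + 1)) * (l : ℝ) + b (l + 1))) :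
    (∀ l : ℕ, 1 ≤ l → 0 ≤ W l ∧ W l ≤ 1) ∧
    (∀ l : ℕ, 1 ≤ l → W l ≤ W (l + 1)) ∧
    (∀ l : ℕ, 1 ≤ l → W l ≤ r / ((1 - p) * (1 + r - p) + r)) := by
  obtain ⟨hq0, hq1⟩ : 0 ≤ p - r ∧ p - r < 1 := ⟨by linarith, by linarith⟩
  have hWeq := whittle_eq_div_add p r hq1.ne b hb W hW
  have hN0 := whittleNumerator_nonneg hr.le hq0 hq1.le
  have hc : ∀ l, 1 - p < 1 - p + r * (p - r) ^ l := fun l => by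
    linarith [mul_pos hr (pow_pos (sub_pos.mpr hrp) l)]
  refine ⟨fun l _ => ⟨?_, ?_⟩, fun l _ => ?_, fun l _ => ?_⟩
  · rw [hWeq]
    exact div_nonneg (hN0 l) (by linarith [hN0 l, hc l])
  · rw [hWeq, div_le_one (by linarith [hN0 l, hc l])]
    linarith [hc l]
  · rw [hWeq, hWeq]
    refine div_add_le_div_add (hN0 l) (whittleNumerator_le_succ hr.le hq0 hq1.le l)
      (by linarith [hc (l + 1)]) ?_
    gcongr 1 - p + r * ?_
    exact pow_le_pow_of_le_one hq0 hq1.le l.le_succ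
  · calc W l ≤ r / (1 - (p - r)) / (r / (1 - (p - r)) + (1 - p)) := by
          rw [hWeq]
          exact div_add_le_div_add (hN0 l) (whittleNumerator_le hr.le hq0 hq1 l) (by linarith)
            (hc l).le
      _ = r / ((1 - p) * (1 + r - p) + r) := by
          have : 1 - (p - r) ≠ 0 := by linarith
          field_simp
          ring
end

section
/- Fix real parameters p, r with 0 < r < p < 1, define b_{0,l} = (r − r(p−r)^l)/(1+r−p) for integers l ≥ 1, and define the Whittle index W(l) = ((b_{0,l} − b_{0,l+1})(l+1) + b_{0,l+1}) / (1 − p + (b_{0,l} − b_{0,l+1})·l + b_{0,l+1}). Then lim_{l→∞} W(l) = r / ((1−p)(1+r−p) + r). (This limit is the Whittle index assigned to every belief state π with b_s ≤ π ≤ p, where b_s = r/(1+r−p).) -/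
/-!
With `q = p - r ∈ [0, 1)` the beliefs are partial geometric sums, `b l = r (1 - q^l) / (1 - q)`,
so consecutive differences are `b l - b (l + 1) = -r q^l`. Both these differences and their
`l`-fold multiples vanish in the limit, hence `W l` tends to `b_s / (1 - p + b_s)` with
`b_s = r / (1 - q)` the stationary belief.
-/

open Filter Topology

theorem tendsto_div_of_tendsto_self_mul {d c : ℕ → ℝ} {a L : ℝ}
    (hd : Tendsto d atTop (𝓝 0)) (hld : Tendsto (fun l : ℕ => (l : ℝ) * d l) atTop (𝓝 0))
    (hc : Tendsto c atTop (𝓝 L)) (hne : a + L ≠ 0) :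
    Tendsto (fun l : ℕ => (d l * ((l : ℝ) + 1) + c l) / (a + d l * l + c l)) atTop
      (𝓝 (L / (a + L))) := by
  have hnum : Tendsto (fun l : ℕ => (l : ℝ) * d l + d l + c l) atTop (𝓝 (0 + 0 + L)) :=
    (hld.add hd).add hc
  have hden : Tendsto (fun l : ℕ => a + (l : ℝ) * d l + c l) atTop (𝓝 (a + 0 + L)) :=
    (tendsto_const_nhds.add hld).add hc
  simp only [zero_add, add_zero] at hnum hden
  refine (hnum.div hden hne).congr fun l => ?_
  simp only [Pi.div_apply]
  ring

section GeometricBelief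

variable {r q : ℝ} {b : ℕ → ℝ}

theorem sub_succ_eq_of_eq_geom (hq : q ≠ 1) (hb : ∀ l, b l = (r - r * q ^ l) / (1 - q))
    (l : ℕ) : b l - b (l + 1) = -(r * q ^ l) := by
  have : 1 - q ≠ 0 := sub_ne_zero.mpr hq.symm
  rw [hb, hb, pow_succ]
  field_simp
  ring

theorem tendsto_of_eq_geom (hq₀ : 0 ≤ q) (hq₁ : q < 1)
    (hb : ∀ l, b l = (r - r * q ^ l) / (1 - q)) :
    Tendsto b atTop (𝓝 (r / (1 - q))) := by
  have h := ((tendsto_pow_atTop_nhds_zero_of_lt_one hq₀ hq₁).const_mul r).const_sub r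
  rw [mul_zero, sub_zero] at h
  exact (h.div_const _).congr fun l => (hb l).symm

theorem tendsto_sub_succ_of_eq_geom (hq₀ : 0 ≤ q) (hq₁ : q < 1)
    (hb : ∀ l, b l = (r - r * q ^ l) / (1 - q)) :
    Tendsto (fun l => b l - b (l + 1)) atTop (𝓝 0) := by
  have h := (tendsto_pow_atTop_nhds_zero_of_lt_one hq₀ hq₁).const_mul r |>.neg
  rw [mul_zero, neg_zero] at h
  exact h.congr fun l => (sub_succ_eq_of_eq_geom hq₁.ne hb l).symm

theorem tendsto_mul_sub_succ_of_eq_geom (hq₀ : 0 ≤ q) (hq₁ : q < 1)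
    (hb : ∀ l, b l = (r - r * q ^ l) / (1 - q)) :
    Tendsto (fun l : ℕ => (l : ℝ) * (b l - b (l + 1))) atTop (𝓝 0) := by
  have h := (tendsto_self_mul_const_pow_of_lt_one hq₀ hq₁).const_mul (-r)
  rw [mul_zero] at h
  refine h.congr fun l => ?_
  rw [sub_succ_eq_of_eq_geom hq₁.ne hb]
  ring

end GeometricBelief

/-- The Whittle index values `W(l)` converge, as `l → ∞`, to
`r / ((1-p)(1+r-p) + r)`, the index assigned to every belief state `π` with
`b_s ≤ π ≤ p`. -/
theorem stmt_10 (p r : ℝ) (hr : 0 < r) (hrp : r < p) (hp : p < 1)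
    (b : ℕ → ℝ) (hb : ∀ l, b l = (r - r * (p - r) ^ l) / (1 + r - p))
    (W : ℕ → ℝ)
    (hW : ∀ l, W l = ((b l - b (l + 1)) * ((l : ℝ) + 1) + b (l + 1)) /
      (1 - p + (b l - b (l + 1)) * (l : ℝ) + b (l + 1))) :
    Filter.Tendsto W Filter.atTop (nhds (r / ((1 - p) * (1 + r - p) + r))) := by
  have hq₀ : 0 ≤ p - r := by linarith
  have hq₁ : p - r < 1 := by linarith
  have hb' : ∀ l, b l = (r - r * (p - r) ^ l) / (1 - (p - r)) := fun l => by
    rw [hb, sub_sub_eq_add_sub, add_comm 1 r]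
  have hD : 0 < 1 + r - p := by linarith
  have hbs : 0 < r / (1 + r - p) := div_pos hr hD
  have hlim := tendsto_div_of_tendsto_self_mul (a := 1 - p)
    (tendsto_sub_succ_of_eq_geom hq₀ hq₁ hb') (tendsto_mul_sub_succ_of_eq_geom hq₀ hq₁ hb')
    ((tendsto_add_atTop_iff_nat 1).mpr (tendsto_of_eq_geom hq₀ hq₁ hb')) (by
      rw [← sub_add, ← add_sub_right_comm 1 r]; linarith)
  have hval : r / (1 - (p - r)) / (1 - p + r / (1 - (p - r)))
      = r / ((1 - p) * (1 + r - p) + r) := by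
    rw [← sub_add, ← add_sub_right_comm 1 r]
    field_simp
  rw [← hval]
  exact hlim.congr fun l => (hW l).symm
end

section
/- Fix real parameters p, r with 0 < r < p < 1, define b_{0,h} = (r − r(p−r)^h)/(1+r−p) for integers h ≥ 1, and define the activation fraction A(h,ρ) = 1 − (1−p)(h−ρ) / (ρ·b_{0,h} + (1−ρ)·b_{0,h+1} + (1−p)(h+1−ρ)) for integers h ≥ 1 and ρ ∈ [0,1]. Then: (i) A(h,0) = A(h+1,1) for every h ≥ 1; (ii) for every fixed h ≥ 1, the function ρ ↦ A(h,ρ) is strictly increasing on [0,1]; (iii) A(1,1) = 1; and (iv) 0 < A(h,ρ) ≤ 1 for all h ≥ 1 and ρ ∈ [0,1]. -/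
/-!
Put `q = p - r ∈ (0, 1)`. Then `b l = r (1 + q + ⋯ + q^(l-1))`, so `b (h+1) = b h + r q^h` and
`b (h+1) ≥ (h+1) r q^h`, each of its `h+1` terms dominating the last. After eliminating `b h`,
`A(h,ρ)` is `1` minus a ratio of affine functions of `ρ`: the numerator `(1-p)(h-ρ)` is nonnegative
and the denominator `b (h+1) + (1-p)(h+1) - (1-p + r q^h) ρ` exceeds it by at least `1-p`, which
gives `0 < A ≤ 1`; the bound on `b (h+1)` is exactly the sign condition under which that ratio is
strictly decreasing in `ρ`.
-/

open Finset

lemma succ_mul_pow_le_geom_sum {q : ℝ} (hq0 : 0 ≤ q) (hq1 : q ≤ 1) (n : ℕ) :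
    (n + 1) * q ^ n ≤ ∑ k ∈ range (n + 1), q ^ k := by
  have h := card_nsmul_le_sum (range (n + 1)) (q ^ ·) (q ^ n)
    fun k hk => pow_le_pow_of_le_one hq0 hq1 (Nat.lt_succ_iff.1 (mem_range.1 hk))
  simpa using h

lemma strictAntiOn_affine_div_affine {α β γ δ : ℝ} {s : Set ℝ}
    (hpos : ∀ x ∈ s, 0 < γ - δ * x) (h : α * δ < β * γ) :
    StrictAntiOn (fun x => (α - β * x) / (γ - δ * x)) s := by
  intro x hx y hy hxy
  rw [div_lt_div_iff₀ (hpos y hy) (hpos x hx)]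
  nlinarith [mul_pos (sub_pos.2 h) (sub_pos.2 hxy)]

lemma one_sub_div_mem_Ioc {x y : ℝ} (hx : 0 ≤ x) (hxy : x < y) : 1 - x / y ∈ Set.Ioc 0 1 := by
  have hy : 0 < y := hx.trans_lt hxy
  constructor
  · linarith [(div_lt_one hy).2 hxy]
  · linarith [div_nonneg hx hy.le]

section

variable {a c B t : ℝ}

lemma affine_ratio_nonneg_and_lt (ha : 0 < a) (hc : 0 ≤ c) (hB : (t + 1) * c ≤ B) (ht : 1 ≤ t)
    {ρ : ℝ} (hρ : ρ ∈ Set.Icc 0 1) :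
    0 ≤ a * t - a * ρ ∧ a * t - a * ρ < B + a * (t + 1) - (a + c) * ρ := by
  obtain ⟨hρ0, hρ1⟩ := hρ
  constructor <;> nlinarith [mul_nonneg (sub_nonneg.2 hρ1) hc]

lemma strictMonoOn_one_sub_affine_ratio (ha : 0 < a) (hc : 0 ≤ c) (hB : (t + 1) * c ≤ B)
    (ht : 1 ≤ t) :
    StrictMonoOn (fun ρ => 1 - (a * t - a * ρ) / (B + a * (t + 1) - (a + c) * ρ))
      (Set.Icc 0 1) := by
  have hanti := strictAntiOn_affine_div_affine
    (fun ρ hρ => (affine_ratio_nonneg_and_lt ha hc hB ht hρ).1.trans_lt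
      (affine_ratio_nonneg_and_lt ha hc hB ht hρ).2)
    (by nlinarith : a * t * (a + c) < a * (B + a * (t + 1)))
  exact fun x hx y hy hxy => sub_lt_sub_left (hanti hx hy hxy) 1

end

/-- Properties of the long-run activation fraction `A(h,ρ)` of the randomized
threshold policy with threshold `b_{0,h}` and randomization `ρ`:
(i) `A(h,0) = A(h+1,1)`; (ii) `ρ ↦ A(h,ρ)` is strictly increasing on `[0,1]`;
(iii) `A(1,1) = 1`; (iv) `0 < A(h,ρ) ≤ 1`. -/
theorem stmt_11 (p r : ℝ) (hr : 0 < r) (hrp : r < p) (hp : p < 1)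
    (b : ℕ → ℝ) (hb : ∀ l, b l = (r - r * (p - r) ^ l) / (1 + r - p))
    (A : ℕ → ℝ → ℝ)
    (hA : ∀ (h : ℕ) (ρ : ℝ), A h ρ =
      1 - (1 - p) * ((h : ℝ) - ρ) /
        (ρ * b h + (1 - ρ) * b (h + 1) + (1 - p) * ((h : ℝ) + 1 - ρ))) :
    (∀ h : ℕ, 1 ≤ h → A h 0 = A (h + 1) 1) ∧
    (∀ h : ℕ, 1 ≤ h → StrictMonoOn (A h) (Set.Icc (0 : ℝ) 1)) ∧
    (A 1 1 = 1) ∧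
    (∀ h : ℕ, 1 ≤ h → ∀ ρ ∈ Set.Icc (0 : ℝ) 1, 0 < A h ρ ∧ A h ρ ≤ 1) := by
  have hq0 : 0 < p - r := sub_pos.2 hrp
  have hq1 : p - r < 1 := by linarith
  have ha : 0 < 1 - p := by linarith
  have hc : ∀ h : ℕ, 0 ≤ r * (p - r) ^ h := fun h => (mul_pos hr (pow_pos hq0 h)).le
  have hgeom : ∀ l, b l = r * ∑ k ∈ range l, (p - r) ^ k := fun l => by
    rw [hb, geom_sum_eq hq1.ne, mul_div_assoc',
      div_eq_div_iff (by linarith : 0 < 1 + r - p).ne' (sub_ne_zero.2 hq1.ne)]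
    ring
  have hb_succ : ∀ l, b (l + 1) = b l + r * (p - r) ^ l := fun l => by
    rw [hgeom, hgeom, sum_range_succ, mul_add]
  have hb_ge : ∀ h : ℕ, ((h : ℝ) + 1) * (r * (p - r) ^ h) ≤ b (h + 1) := fun h => by
    rw [hgeom, mul_left_comm]
    exact mul_le_mul_of_nonneg_left (succ_mul_pow_le_geom_sum hq0.le hq1.le h) hr.le
  have hA' : ∀ (h : ℕ) (ρ : ℝ), A h ρ = 1 - ((1 - p) * h - (1 - p) * ρ) /
      (b (h + 1) + (1 - p) * (h + 1) - (1 - p + r * (p - r) ^ h) * ρ) := fun h ρ => by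
    rw [hA, hb_succ]; ring_nf
  refine ⟨fun h _ => ?_, fun h hh => ?_, by rw [hA]; norm_num, fun h hh ρ hρ => ?_⟩
  · rw [hA, hA]; push_cast; ring_nf
  · exact (strictMonoOn_one_sub_affine_ratio ha (hc h) (hb_ge h) (by exact_mod_cast hh)).congr
      fun ρ _ => (hA' h ρ).symm
  · obtain ⟨hnum, hlt⟩ := affine_ratio_nonneg_and_lt ha (hc h) (hb_ge h) (by exact_mod_cast hh) hρ
    rw [hA']
    exact one_sub_div_mem_Ioc hnum hlt
end

section
/- Fix real parameters p, r with 0 < r < p < 1, define b_{0,h} = (r − r(p−r)^h)/(1+r−p) for integers h ≥ 1, and define the activation fraction A(h,ρ) = 1 − (1−p)(h−ρ) / (ρ·b_{0,h} + (1−ρ)·b_{0,h+1} + (1−p)(h+1−ρ)) for integers h ≥ 1 and ρ ∈ [0,1]. Then for every α ∈ (0,1] there exists a unique pair (h,ρ) with h an integer ≥ 1 and ρ ∈ (0,1] such that A(h,ρ) = α. -/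
/-!
For fixed `h ≥ 1`, `A h ρ` is continuous and strictly increasing in `ρ ∈ [0,1]`: with
`c = 1 - p`, a cross-multiplication reduces this to `h (b_{h+1} - b_h) < b_{h+1} + c`, which holds
because `b` is a nonnegative concave sequence (its increments `r (p-r)^h` decrease). Moreover
`A h 0 = A (h+1) 1`, `A 1 1 = 1` and `A h 0 → 0` since `b` is bounded, so the images of `(0,1]`
under `A h ·` are the consecutive intervals `(A (h+1) 1, A h 1]`, which tile `(0,1]`.
-/

open Set Filter Topology

theorem existsUnique_eq_of_glued {f : ℕ → ℝ → ℝ}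
    (hcont : ∀ n, ContinuousOn (f n) (Icc 0 1)) (hmono : ∀ n, StrictMonoOn (f n) (Icc 0 1))
    (hglue : ∀ n, f (n + 1) 1 = f n 0) {α : ℝ} (htop : α ≤ f 0 1) (hbot : ∃ n, f n 0 < α) :
    ∃! x : ℕ × ℝ, x.2 ∈ Ioc 0 1 ∧ f x.1 x.2 = α := by
  have h01 : (0 : ℝ) ∈ Icc 0 1 := left_mem_Icc.2 zero_le_one
  have h11 : (1 : ℝ) ∈ Icc 0 1 := right_mem_Icc.2 zero_le_one
  have hanti : StrictAnti fun n => f n 1 :=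
    strictAnti_nat_of_succ_lt fun n => (hglue n).trans_lt (hmono n h01 h11 zero_lt_one)
  have hmaps : ∀ n, ∀ ρ ∈ Ioc (0 : ℝ) 1, f n ρ ∈ Ioc (f (n + 1) 1) (f n 1) := fun n ρ hρ =>
    ⟨(hglue n).trans_lt (hmono n h01 (Ioc_subset_Icc_self hρ) hρ.1),
      (hmono n).monotoneOn (Ioc_subset_Icc_self hρ) h11 hρ.2⟩
  classical
  set n := Nat.find hbot
  have hα_le : α ≤ f n 1 := by
    rcases hk : n with _ | m
    · exact htop
    · rw [hglue]
      exact not_lt.1 (Nat.find_min hbot (by omega))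
  obtain ⟨ρ, hρ, hfρ⟩ :=
    intermediate_value_Ioc zero_le_one (hcont n) ⟨Nat.find_spec hbot, hα_le⟩
  refine ⟨(n, ρ), ⟨hρ, hfρ⟩, ?_⟩
  rintro ⟨k, σ⟩ ⟨hσ, hfσ⟩
  obtain rfl : k = n := by
    by_contra hkn
    have hαk : α ∈ Ioc (f (k + 1) 1) (f k 1) := hfσ ▸ hmaps k σ hσ
    have hαn : α ∈ Ioc (f (n + 1) 1) (f n 1) := hfρ ▸ hmaps n ρ hρ
    exact Set.disjoint_left.1 (hanti.antitone.pairwise_disjoint_on_Ioc_succ hkn) hαk hαn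
  exact congrArg (n, ·)
    ((hmono n).injOn (Ioc_subset_Icc_self hσ) (Ioc_subset_Icc_self hρ) (hfσ.trans hfρ.symm))

theorem mul_sub_le_of_antitone_sub {b : ℕ → ℝ} (hb : ∀ n, 0 ≤ b n)
    (hconc : Antitone fun n => b (n + 1) - b n) (h : ℕ) :
    (h : ℝ) * (b (h + 1) - b h) ≤ b (h + 1) := by
  have hsum : ((h : ℝ) + 1) * (b (h + 1) - b h) ≤ b (h + 1) - b 0 := by
    rw [← Finset.sum_range_sub]
    simpa using Finset.card_nsmul_le_sum (Finset.range (h + 1)) _ _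
      fun i hi => hconc (Nat.lt_succ_iff.1 (Finset.mem_range.1 hi))
  rcases le_or_gt 0 (b (h + 1) - b h) with hΔ | hΔ
  · nlinarith [hb 0]
  · nlinarith [hb (h + 1), (Nat.cast_nonneg h : (0 : ℝ) ≤ h)]

/-- `A(h,ρ)` with `c = 1 - p`. -/
noncomputable def activationFraction (c : ℝ) (b : ℕ → ℝ) (h : ℕ) (ρ : ℝ) : ℝ :=
  1 - c * (h - ρ) / (ρ * b h + (1 - ρ) * b (h + 1) + c * (h + 1 - ρ))

namespace activationFraction

variable {c : ℝ} {b : ℕ → ℝ}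

theorem succ_one (c : ℝ) (b : ℕ → ℝ) (h : ℕ) :
    activationFraction c b (h + 1) 1 = activationFraction c b h 0 := by
  simp only [activationFraction]
  push_cast
  ring_nf

theorem one_one (c : ℝ) (b : ℕ → ℝ) : activationFraction c b 1 1 = 1 := by
  simp [activationFraction]

theorem denom_pos (hc : 0 < c) (hb : ∀ n, 0 ≤ b n) {h : ℕ} (hh : 1 ≤ h) {ρ : ℝ}
    (hρ : ρ ∈ Icc (0 : ℝ) 1) : 0 < ρ * b h + (1 - ρ) * b (h + 1) + c * (h + 1 - ρ) := by
  have hh' : (1 : ℝ) ≤ h := by exact_mod_cast hh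
  have := mul_nonneg hρ.1 (hb h)
  have := mul_nonneg (sub_nonneg.2 hρ.2) (hb (h + 1))
  nlinarith [hρ.2]

theorem continuousOn (hc : 0 < c) (hb : ∀ n, 0 ≤ b n) {h : ℕ} (hh : 1 ≤ h) :
    ContinuousOn (activationFraction c b h) (Icc 0 1) :=
  continuousOn_const.sub <| ContinuousOn.div (by fun_prop) (by fun_prop)
    fun _ hρ => (denom_pos hc hb hh hρ).ne'

theorem strictMonoOn (hc : 0 < c) (hb : ∀ n, 0 ≤ b n)
    (hconc : Antitone fun n => b (n + 1) - b n) {h : ℕ} (hh : 1 ≤ h) :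
    StrictMonoOn (activationFraction c b h) (Icc 0 1) := by
  intro ρ₁ hρ₁ ρ₂ hρ₂ hlt
  have hD₁ := denom_pos hc hb hh hρ₁
  have hD₂ := denom_pos hc hb hh hρ₂
  simp only [activationFraction]
  rw [sub_lt_sub_iff_left, div_lt_div_iff₀ hD₂ hD₁]
  have hkey : 0 < b (h + 1) + c - h * (b (h + 1) - b h) := by
    linarith [mul_sub_le_of_antitone_sub hb hconc h]
  nlinarith [mul_pos (mul_pos hc (sub_pos.2 hlt)) hkey]

theorem apply_zero (hc : 0 < c) (hb : ∀ n, 0 ≤ b n) (h : ℕ) :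
    activationFraction c b h 0 = (b (h + 1) + c) / (b (h + 1) + c * (h + 1)) := by
  have hD : 0 < b (h + 1) + c * (h + 1) := by positivity [hb (h + 1)]
  simp only [activationFraction, zero_mul, sub_zero, zero_add, one_mul]
  rw [one_sub_div hD.ne']
  ring_nf

theorem tendsto_zero (hc : 0 < c) (hb : ∀ n, 0 ≤ b n) {C : ℝ} (hC : ∀ n, b n ≤ C) :
    Tendsto (fun h => activationFraction c b h 0) atTop (𝓝 0) := by
  have hlim := (tendsto_one_div_add_atTop_nhds_zero_nat (𝕜 := ℝ)).const_mul ((C + c) / c)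
  rw [mul_zero] at hlim
  refine tendsto_of_tendsto_of_tendsto_of_le_of_le tendsto_const_nhds hlim (fun h => ?_) fun h => ?_
  all_goals
    have hD : 0 < b (h + 1) + c * (h + 1) := by positivity [hb (h + 1)]
    rw [apply_zero hc hb]
  · exact div_nonneg (by linarith [hb (h + 1)]) hD.le
  · rw [div_mul_div_comm, mul_one, div_le_div_iff₀ hD (by positivity)]
    nlinarith [hC (h + 1), hb (h + 1), (Nat.cast_nonneg h : (0 : ℝ) ≤ h)]

end activationFraction

section GeometricPartialSum

variable {r q : ℝ}

theorem geom_partial_nonneg (hr : 0 ≤ r) (hq0 : 0 ≤ q) (hq1 : q ≤ 1) (l : ℕ) :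
    0 ≤ (r - r * q ^ l) / (1 - q) :=
  div_nonneg (sub_nonneg.2 (mul_le_of_le_one_right hr (pow_le_one₀ hq0 hq1))) (sub_nonneg.2 hq1)

theorem geom_partial_le (hr : 0 ≤ r) (hq0 : 0 ≤ q) (hq1 : q ≤ 1) (l : ℕ) :
    (r - r * q ^ l) / (1 - q) ≤ r / (1 - q) := by
  gcongr
  exact sub_le_self r (mul_nonneg hr (pow_nonneg hq0 l))

theorem antitone_geom_partial_sub (hr : 0 ≤ r) (hq0 : 0 ≤ q) (hq1 : q < 1) :
    Antitone fun l => (r - r * q ^ (l + 1)) / (1 - q) - (r - r * q ^ l) / (1 - q) := by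
  have hΔ : ∀ l : ℕ, (r - r * q ^ (l + 1)) / (1 - q) - (r - r * q ^ l) / (1 - q) = r * q ^ l :=
    fun l => by
      field_simp [(sub_pos.2 hq1).ne']
      ring
  intro m n hmn
  simp only [hΔ]
  exact mul_le_mul_of_nonneg_left (pow_le_pow_of_le_one hq0 hq1.le hmn) hr

end GeometricPartialSum

/-- Every activation fraction `α ∈ (0,1]` is achieved by a unique randomized
threshold policy: there is a unique pair `(h,ρ)` with `h ≥ 1` and `ρ ∈ (0,1]`
such that `A(h,ρ) = α`. -/
theorem stmt_13 (p r : ℝ) (hr : 0 < r) (hrp : r < p) (hp : p < 1)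
    (b : ℕ → ℝ) (hb : ∀ l, b l = (r - r * (p - r) ^ l) / (1 + r - p))
    (A : ℕ → ℝ → ℝ)
    (hA : ∀ (h : ℕ) (ρ : ℝ), A h ρ =
      1 - (1 - p) * ((h : ℝ) - ρ) /
        (ρ * b h + (1 - ρ) * b (h + 1) + (1 - p) * ((h : ℝ) + 1 - ρ))) :
    ∀ α ∈ Set.Ioc (0 : ℝ) 1,
      ∃! hρ : ℕ × ℝ, 1 ≤ hρ.1 ∧ hρ.2 ∈ Set.Ioc (0 : ℝ) 1 ∧ A hρ.1 hρ.2 = α := by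
  intro α ⟨hα0, hα1⟩
  have hq0 : 0 ≤ p - r := by linarith
  have hq1 : p - r < 1 := by linarith
  have hc : 0 < 1 - p := by linarith
  obtain rfl : b = fun l => (r - r * (p - r) ^ l) / (1 - (p - r)) :=
    funext fun l => by rw [hb, sub_sub_eq_add_sub]
  have hbnn := geom_partial_nonneg hr.le hq0 hq1.le
  have hconc := antitone_geom_partial_sub hr.le hq0 hq1
  have hlim := activationFraction.tendsto_zero hc hbnn (geom_partial_le hr.le hq0 hq1.le)
  obtain ⟨⟨n, ρ⟩, ⟨hρ, hfρ⟩, huniq⟩ :=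
    existsUnique_eq_of_glued
      (fun n => activationFraction.continuousOn hc hbnn n.succ_pos)
      (fun n => activationFraction.strictMonoOn hc hbnn hconc n.succ_pos)
      (fun n => activationFraction.succ_one _ _ (n + 1))
      (by simpa [activationFraction.one_one] using hα1)
      (((hlim.comp (tendsto_add_atTop_nat 1)).eventually (gt_mem_nhds hα0)).exists)
  refine ⟨(n + 1, ρ), ⟨n.succ_pos, hρ, (hA _ _).trans hfρ⟩, ?_⟩
  rintro ⟨k, σ⟩ ⟨hk, hσ, hkσ⟩
  obtain ⟨m, rfl⟩ := Nat.exists_eq_add_of_le' hk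
  obtain ⟨rfl, rfl⟩ := Prod.mk.inj (huniq (m, σ) ⟨hσ, (hA _ _).symm.trans hkσ⟩)
  rfl
end

section
/- Fix real parameters p, r with 0 < r < p < 1, an integer h ≥ 2, and set b = b_{0,h} = (r − r(p−r)^h)/(1+r−p). Define the polynomial χ₂(λ) = ((1−p) + (1−b)λ) · Σ_{j=0}^{h−3} (1+λ)^j + (1+λ)^{h−2} · ( ((1−p)+λ)(2+λ) + b ), where the sum is empty when h = 2. Then χ₂(0) = h(1−p) + b ≠ 0, and every complex root λ of χ₂ satisfies −2 < Re(λ) < 0. -/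
/-!
Multiplying by `λ` telescopes the geometric sum: `λ χ₂(λ) = (1+λ)^h (λ+q) - ((1-b)λ + q)` with
`q = 1 - p`. So at a root `λ ≠ 0` we get `(1+λ)^h (λ+q) = (1-b)(λ+q) + b q`, with `0 < b < 1`.
If `Re λ ≥ 0` or `Re λ ≤ -2`, then `|1+λ| ≥ 1` and `|λ+q| > q`, and the left side is at least
`|λ+q|` in norm while the right side, a convex combination, is strictly smaller.
-/

open Finset

/-- `χ₂` with `q = 1 - p` and `n = h - 2`. -/
def classTwoChar {R : Type*} [CommRing R] (q b : R) (n : ℕ) (x : R) : R :=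
  (q + (1 - b) * x) * ∑ j ∈ range n, (1 + x) ^ j + (1 + x) ^ n * ((q + x) * (2 + x) + b)

section CommRing

variable {R : Type*} [CommRing R] (q b : R) (n : ℕ)

theorem classTwoChar_zero : classTwoChar q b n 0 = (n + 2) * q + b := by
  simp only [classTwoChar, add_zero, mul_zero, one_pow, sum_const, card_range, nsmul_eq_mul,
    mul_one, one_mul]
  ring

theorem mul_classTwoChar (x : R) :
    x * classTwoChar q b n x = (1 + x) ^ (n + 2) * (x + q) - ((1 - b) * x + q) := by
  have hgeom : (∑ j ∈ range n, (1 + x) ^ j) * x = (1 + x) ^ n - 1 := by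
    simpa using geom_sum_mul (1 + x) n
  rw [classTwoChar]
  linear_combination (q + (1 - b) * x) * hgeom

end CommRing

theorem thresholdBelief_pos_lt_one {p r : ℝ} (hr : 0 < r) (hrp : r < p) (hp : p < 1) {h : ℕ}
    (hh : h ≠ 0) : 0 < (r - r * (p - r) ^ h) / (1 + r - p) ∧
      (r - r * (p - r) ^ h) / (1 + r - p) < 1 := by
  have hden : 0 < 1 + r - p := by linarith
  have hpow_pos : 0 < (p - r) ^ h := pow_pos (by linarith) h
  have hpow_lt : (p - r) ^ h < 1 := pow_lt_one₀ (by linarith) (by linarith) hh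
  constructor
  · exact div_pos (by nlinarith) hden
  · rw [div_lt_one hden]
    nlinarith

namespace Complex

theorem one_le_norm_one_add {l : ℂ} (hl : 0 ≤ l.re ∨ l.re ≤ -2) : 1 ≤ ‖1 + l‖ := by
  have hre : |1 + l.re| ≤ ‖1 + l‖ := by simpa using abs_re_le_norm (1 + l)
  rcases hl with hl | hl
  · exact (le_abs.mpr (Or.inl (by linarith))).trans hre
  · exact (le_abs.mpr (Or.inr (by linarith))).trans hre

theorem lt_norm_add_ofReal {l : ℂ} {q : ℝ} (hq0 : 0 ≤ q) (hq1 : q < 1) (hl0 : l ≠ 0)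
    (hl : 0 ≤ l.re ∨ l.re ≤ -2) : q < ‖l + q‖ := by
  rcases hl with hl | hl
  · have hnormSq : 0 < l.re ^ 2 + l.im ^ 2 := by simpa [normSq_apply, sq] using normSq_pos.mpr hl0
    have hsq : q ^ 2 < ‖l + q‖ ^ 2 := by
      rw [Complex.sq_norm, normSq_apply]
      simp only [add_re, ofReal_re, add_im, ofReal_im, add_zero]
      nlinarith
    exact lt_of_pow_lt_pow_left₀ 2 (norm_nonneg _) hsq
  · have hre : |l.re + q| ≤ ‖l + q‖ := by simpa using abs_re_le_norm (l + q)
    have hneg : q < -(l.re + q) := by linarith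
    exact hneg.trans_le ((neg_le_abs _).trans hre)

theorem norm_le_of_pow_mul_eq {z w : ℂ} {q b : ℝ} {m : ℕ} (hq : 0 ≤ q) (hb0 : 0 < b)
    (hb1 : b ≤ 1) (hz : 1 ≤ ‖z‖) (h : z ^ m * w = (1 - b) * w + b * q) : ‖w‖ ≤ q := by
  have hnorm : ‖z ^ m * w‖ ≤ (1 - b) * ‖w‖ + b * q := by
    rw [h]
    calc ‖(1 - b : ℂ) * w + b * q‖ ≤ ‖(1 - b : ℂ) * w‖ + ‖(b * q : ℂ)‖ := norm_add_le _ _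
      _ = (1 - b) * ‖w‖ + b * q := by
        rw [norm_mul, ← ofReal_one, ← ofReal_sub, ← ofReal_mul, norm_real, norm_real,
          Real.norm_of_nonneg (by linarith), Real.norm_of_nonneg (by positivity)]
  have hgrow : ‖w‖ ≤ ‖z ^ m * w‖ := by
    rw [norm_mul, norm_pow]
    exact le_mul_of_one_le_left (norm_nonneg w) (one_le_pow₀ hz)
  nlinarith

theorem classTwoChar_zero_ne_zero {q b : ℝ} (hq : 0 ≤ q) (hb : 0 < b) (n : ℕ) :
    classTwoChar (q : ℂ) b n 0 ≠ 0 := by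
  rw [classTwoChar_zero]
  exact_mod_cast (by positivity : (0 : ℝ) < (n + 2) * q + b).ne'

theorem re_mem_Ioo_of_classTwoChar_eq_zero {q b : ℝ} {n : ℕ} (hq0 : 0 ≤ q) (hq1 : q < 1)
    (hb0 : 0 < b) (hb1 : b ≤ 1) {l : ℂ} (hl : classTwoChar (q : ℂ) b n l = 0) :
    -2 < l.re ∧ l.re < 0 := by
  have hl0 : l ≠ 0 := by
    rintro rfl
    exact classTwoChar_zero_ne_zero hq0 hb0 n hl
  have hroot : (1 + l) ^ (n + 2) * (l + q) = (1 - b) * (l + q) + b * q := by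
    linear_combination l * hl - mul_classTwoChar (q : ℂ) b n l
  by_contra hre
  have hre' : 0 ≤ l.re ∨ l.re ≤ -2 := by
    rw [not_and_or, not_lt, not_lt] at hre
    exact hre.symm
  exact (lt_norm_add_ofReal hq0 hq1 hl0 hre').not_ge
    (norm_le_of_pow_mul_eq hq0 hb0 hb1 (one_le_norm_one_add hre') hroot)

end Complex

/-- For the reduced characteristic polynomial `χ₂` of the class-2 block (with
threshold `h ≥ 2` and threshold belief `b = b_{0,h}`): `χ₂(0) = h(1-p) + b ≠ 0`,
and every complex root of `χ₂` has real part in `(-2, 0)`. -/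
theorem stmt_15 (p r : ℝ) (hr : 0 < r) (hrp : r < p) (hp : p < 1)
    (h : ℕ) (hh : 2 ≤ h)
    (b : ℝ) (hb : b = (r - r * (p - r) ^ h) / (1 + r - p))
    (χ₂ : ℂ → ℂ)
    (hχ₂ : ∀ l : ℂ, χ₂ l =
      ((1 - (p : ℂ)) + (1 - (b : ℂ)) * l) * (∑ j ∈ Finset.range (h - 2), (1 + l) ^ j) +
        (1 + l) ^ (h - 2) * (((1 - (p : ℂ)) + l) * (2 + l) + (b : ℂ))) :
    (χ₂ 0 = (h : ℂ) * (1 - (p : ℂ)) + (b : ℂ) ∧ χ₂ 0 ≠ 0) ∧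
    (∀ l : ℂ, χ₂ l = 0 → -2 < l.re ∧ l.re < 0) := by
  obtain ⟨hb0, hb1⟩ := hb ▸ thresholdBelief_pos_lt_one hr hrp hp (by omega : h ≠ 0)
  have hq0 : 0 ≤ 1 - p := by linarith
  have hq1 : 1 - p < 1 := by linarith
  have hχ : ∀ l, χ₂ l = classTwoChar ((1 - p : ℝ) : ℂ) b (h - 2) l := by
    intro l
    rw [hχ₂, classTwoChar, Complex.ofReal_sub, Complex.ofReal_one]
  refine ⟨⟨?_, hχ 0 ▸ Complex.classTwoChar_zero_ne_zero hq0 hb0 _⟩, fun l hl => ?_⟩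
  · rw [hχ, classTwoChar_zero]
    push_cast [Nat.cast_sub hh]
    ring
  · exact Complex.re_mem_Ioo_of_classTwoChar_eq_zero hq0 hq1 hb0 hb1.le (hχ l ▸ hl)
end

section
/- Let b and p be real numbers with 0 < b < p < 1. Then for every complex number λ with |1+λ| ≥ 1 and |Re(1+λ)| < 1, the strict inequality |(1−p) + λ| > |(1−p) + (1−b)λ| holds. -/
open Complex

theorem normSq_add_sub_normSq_add_mul (b p : ℝ) (l : ℂ) :
    normSq ((1 - p) + l) - normSq ((1 - p) + (1 - b) * l) =
      normSq (1 + l) * ((2 - b) * b) - 2 * (1 + l).re * (b * (1 + p - b)) + b * (2 * p - b) := by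
  simp only [normSq_apply, add_re, add_im, sub_re, sub_im, mul_re, mul_im, one_re, one_im,
    ofReal_re, ofReal_im]
  ring

/-- The coefficients sum to zero, so the expression vanishes at `N = r = 1`; it grows in `N`
and decreases in `r`. -/
theorem modulus_gap_pos {b p N r : ℝ} (hb : 0 < b) (hb2 : b ≤ 2) (hbp : b < 1 + p)
    (hN : 1 ≤ N) (hr : r < 1) :
    0 < N * ((2 - b) * b) - 2 * r * (b * (1 + p - b)) + b * (2 * p - b) := by
  have hN' : (2 - b) * b ≤ N * ((2 - b) * b) :=
    le_mul_of_one_le_left (mul_nonneg (by linarith) hb.le) hN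
  have hr' : 2 * r * (b * (1 + p - b)) < 2 * (b * (1 + p - b)) := by
    nlinarith [mul_pos hb (sub_pos.mpr hbp)]
  linarith

/-- Key modulus inequality: for `0 < b < p < 1` and every complex `λ` with
`|1+λ| ≥ 1` and `|Re(1+λ)| < 1`, one has `|(1-p) + (1-b)λ| < |(1-p) + λ|`. -/
theorem stmt_16 (b p : ℝ) (hb : 0 < b) (hbp : b < p) (hp : p < 1) :
    ∀ l : ℂ, 1 ≤ ‖1 + l‖ → |(1 + l).re| < 1 →
      ‖(1 - (p : ℂ)) + (1 - (b : ℂ)) * l‖ <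
        ‖(1 - (p : ℂ)) + l‖ := by
  intro l hnorm hre
  have hnormSq : 1 ≤ normSq (1 + l) := by
    rw [normSq_eq_norm_sq]
    exact one_le_pow₀ hnorm
  rw [← sq_lt_sq₀ (norm_nonneg _) (norm_nonneg _), ← normSq_eq_norm_sq, ← normSq_eq_norm_sq,
    ← sub_pos, normSq_add_sub_normSq_add_mul]
  exact modulus_gap_pos hb (by linarith) (by linarith) hnormSq (abs_lt.mp hre).2
end

section
/- Fix real parameters p, r with 0 < r < p < 1, an integer h ≥ 2, and set b = b_{0,h} = (r − r(p−r)^h)/(1+r−p). Define the polynomial χ₂(λ) = ((1−p) + (1−b)λ) · Σ_{j=0}^{h−3} (1+λ)^j + (1+λ)^{h−2} · ( ((1−p)+λ)(2+λ) + b ), where the sum is empty when h = 2. Then every complex root λ of χ₂ satisfies |1+λ| < 1. -/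
/-!
Write `μ = 1 + λ` and `c = 1 - p`. Multiplying `χ₂` by `λ` telescopes the geometric sum, so a
root `λ ≠ 0` satisfies `μ ^ h (λ + c) = (λ + c) - b λ`. If `|μ| ≥ 1`, then `|λ + c - b λ| < |λ + c|`,
because `|1 + λ| ≥ 1` means `2 Re λ ≥ -|λ|²`, which keeps the cross term of
`|λ + c|² - |λ + c - b λ|² = b ((2 - b) |λ|² + 2 c Re λ)` positive when `0 < b` and `b + c < 2`.
The two sides of the equation therefore cannot have the same modulus.
-/

open Finset

/-- The belief value `b_{0,h}` at the threshold `h`. -/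
noncomputable def thresholdBelief (p r : ℝ) (h : ℕ) : ℝ :=
  (r - r * (p - r) ^ h) / (1 + r - p)

section thresholdBelief

variable {p r : ℝ} {h : ℕ}

lemma thresholdBelief_pos (hr : 0 < r) (hrp : r < p) (hp : p < 1) (hh : h ≠ 0) :
    0 < thresholdBelief p r h := by
  have hpow : (p - r) ^ h < 1 := pow_lt_one₀ (by linarith) (by linarith) hh
  exact div_pos (by nlinarith) (by linarith)

lemma thresholdBelief_lt_one (hr : 0 < r) (hrp : r < p) (hp : p < 1) :
    thresholdBelief p r h < 1 := by
  have hpow : 0 < (p - r) ^ h := pow_pos (by linarith) h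
  rw [thresholdBelief, div_lt_one (by linarith)]
  nlinarith

end thresholdBelief

lemma mul_geom_sum_add_eq {R : Type*} [CommRing R] (b c l : R) (n : ℕ) :
    l * ((c + (1 - b) * l) * ∑ j ∈ range n, (1 + l) ^ j +
        (1 + l) ^ n * ((c + l) * (2 + l) + b)) =
      (1 + l) ^ (n + 2) * (l + c) - (l + c - b * l) := by
  linear_combination (c + (1 - b) * l) * geom_sum_mul (1 + l) n

lemma Complex.norm_add_sub_mul_lt {b c : ℝ} {l : ℂ} (hb : 0 < b) (hc : 0 ≤ c) (hbc : b + c < 2)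
    (hl : l ≠ 0) (h1 : 1 ≤ ‖1 + l‖) : ‖l + c - b * l‖ < ‖l + c‖ := by
  have hsq : ‖l + c - b * l‖ ^ 2 < ‖l + c‖ ^ 2 := by
    have hnormSq : 0 < l.re ^ 2 + l.im ^ 2 := by
      simpa [Complex.normSq_apply, sq] using Complex.normSq_pos.mpr hl
    have hre : -(l.re ^ 2 + l.im ^ 2) ≤ 2 * l.re := by
      have : 1 ≤ ‖1 + l‖ ^ 2 := one_le_pow₀ h1
      rw [Complex.sq_norm, Complex.normSq_apply] at this
      simp only [Complex.add_re, Complex.add_im, Complex.one_re, Complex.one_im] at this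
      nlinarith
    have hcross : 0 < (2 - b - c) * (l.re ^ 2 + l.im ^ 2) := mul_pos (by linarith) hnormSq
    simp only [Complex.sq_norm, Complex.normSq_apply, Complex.add_re, Complex.add_im,
      Complex.sub_re, Complex.sub_im, Complex.mul_re, Complex.mul_im, Complex.ofReal_re,
      Complex.ofReal_im]
    nlinarith [mul_le_mul_of_nonneg_left hre hc]
  exact lt_of_pow_lt_pow_left₀ 2 (norm_nonneg _) hsq

/-- Stability of the class-2 block of the linearized fluid dynamics of Whittle's
Index Policy: every complex root `λ` of the reduced characteristic polynomial `χ₂`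
satisfies `|1+λ| < 1`. -/
theorem stmt_17 (p r : ℝ) (hr : 0 < r) (hrp : r < p) (hp : p < 1)
    (h : ℕ) (hh : 2 ≤ h)
    (b : ℝ) (hb : b = (r - r * (p - r) ^ h) / (1 + r - p))
    (χ₂ : ℂ → ℂ)
    (hχ₂ : ∀ l : ℂ, χ₂ l =
      ((1 - (p : ℂ)) + (1 - (b : ℂ)) * l) * (∑ j ∈ Finset.range (h - 2), (1 + l) ^ j) +
        (1 + l) ^ (h - 2) * (((1 - (p : ℂ)) + l) * (2 + l) + (b : ℂ))) :
    ∀ l : ℂ, χ₂ l = 0 → ‖1 + l‖ < 1 := by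
  have hb0 : 0 < b := hb ▸ thresholdBelief_pos hr hrp hp (by omega)
  have hb1 : b < 1 := hb ▸ thresholdBelief_lt_one hr hrp hp
  obtain ⟨n, rfl⟩ : ∃ n, h = n + 2 := ⟨h - 2, by omega⟩
  simp only [Nat.add_sub_cancel] at hχ₂
  intro l hroot
  by_contra! h1
  have hl : l ≠ 0 := by
    rintro rfl
    have hpos : 0 < (1 - p) * n + ((1 - p) * 2 + b) := by positivity
    have : χ₂ 0 = (((1 - p) * n + ((1 - p) * 2 + b) : ℝ) : ℂ) := by simp [hχ₂]
    exact hpos.ne' (by exact_mod_cast this.symm.trans hroot)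
  have heq : (1 + l) ^ (n + 2) * (l + (1 - p : ℝ)) = l + (1 - p : ℝ) - b * l := by
    have := mul_geom_sum_add_eq (b : ℂ) (1 - p) l n
    rw [← hχ₂, hroot, mul_zero, eq_comm, sub_eq_zero] at this
    exact_mod_cast this
  have hlt := Complex.norm_add_sub_mul_lt (c := 1 - p) hb0 (by linarith) (by linarith) hl h1
  rw [← heq, norm_mul, norm_pow] at hlt
  nlinarith [one_le_pow₀ (n := n + 2) h1, norm_nonneg (l + ((1 - p : ℝ) : ℂ))]
end

section
/- Fix real parameters p, r with 0 < r < p < 1 and an integer h ≥ 1, and set b_{0,l} = (r − r(p−r)^l)/(1+r−p) for integers l ≥ 1. Define the polynomial χ₁(λ) = (λ + (1−p) + b_{0,h})·(1+λ)^{h−1} − (b_{0,h+1} − b_{0,h}) · Σ_{j=0}^{h−2} (1+λ)^j, where the sum is empty (equal to 0) when h = 1. Then every complex root λ of χ₁ satisfies |1+λ| < 1. -/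
/-! With `z = 1 + λ`, a root satisfies `(z - s) z ^ (h-1) = c (1 + z + ⋯ + z ^ (h-2))`, where
`s = p - b_{0,h} ∈ [0, p]` and `c = b_{0,h+1} - b_{0,h} = r (p-r) ^ h ≥ 0`. If `|z| ≥ 1`, taking
norms gives `(1 - s) |z| ^ (h-1) ≤ (h-1) c |z| ^ (h-1)`. This contradicts `(h-1) c < 1 - s`, which
holds because `b_{0,h} = r ∑_{j<h} (p-r) ^ j ≥ h r (p-r) ^ h`. -/

open Finset

theorem norm_geom_sum_le_of_one_le_norm {R : Type*} [SeminormedRing R] [NormOneClass R]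
    {z : R} (hz : 1 ≤ ‖z‖) (m : ℕ) : ‖∑ j ∈ range m, z ^ j‖ ≤ m * ‖z‖ ^ m := by
  calc ‖∑ j ∈ range m, z ^ j‖ ≤ ∑ j ∈ range m, ‖z‖ ^ j :=
        (norm_sum_le _ _).trans (sum_le_sum fun j _ => norm_pow_le z j)
    _ ≤ #(range m) • ‖z‖ ^ m :=
        sum_le_card_nsmul _ _ _ fun j hj => pow_le_pow_right₀ hz (mem_range.mp hj).le
    _ = m * ‖z‖ ^ m := by rw [card_range, nsmul_eq_mul]

theorem norm_lt_one_of_sub_mul_pow_eq_mul_geom_sum {K : Type*} [NormedDivisionRing K]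
    {z s c : K} {m : ℕ} (hsc : m * ‖c‖ + ‖s‖ < 1)
    (hz : (z - s) * z ^ m = c * ∑ j ∈ range m, z ^ j) : ‖z‖ < 1 := by
  by_contra! hz1
  have hzm : 0 < ‖z‖ ^ m := pow_pos (zero_lt_one.trans_le hz1) m
  have hle : (1 - ‖s‖) * ‖z‖ ^ m ≤ (m * ‖c‖) * ‖z‖ ^ m :=
    calc (1 - ‖s‖) * ‖z‖ ^ m ≤ ‖z - s‖ * ‖z‖ ^ m := by
          gcongr; linarith [norm_sub_norm_le z s]
      _ = ‖c * ∑ j ∈ range m, z ^ j‖ := by rw [← hz, norm_mul, norm_pow]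
      _ ≤ ‖c‖ * (m * ‖z‖ ^ m) := by
          rw [norm_mul]; gcongr; exact norm_geom_sum_le_of_one_le_norm hz1 m
      _ = (m * ‖c‖) * ‖z‖ ^ m := by ring
  linarith [le_of_mul_le_mul_right hle hzm]

/-- The belief values `b_{0,l}` of the paper. -/
noncomputable def belief (p r : ℝ) (l : ℕ) : ℝ := (r - r * (p - r) ^ l) / (1 + r - p)

section belief

variable {p r : ℝ}

theorem belief_eq_mul_geom_sum (hpr : p - r ≠ 1) (l : ℕ) :
    belief p r l = r * ∑ j ∈ range l, (p - r) ^ j := by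
  have hden : 1 + r - p ≠ 0 := fun h => hpr (by linarith)
  rw [belief, geom_sum_eq hpr, mul_div_assoc', div_eq_div_iff hden (sub_ne_zero.mpr hpr)]
  ring

theorem belief_succ_sub_belief (hpr : p - r ≠ 1) (l : ℕ) :
    belief p r (l + 1) - belief p r l = r * (p - r) ^ l := by
  rw [belief_eq_mul_geom_sum hpr, belief_eq_mul_geom_sum hpr, sum_range_succ]
  ring

theorem belief_le (hr : 0 ≤ r) (hrp : r ≤ p) (hp : p < 1) (l : ℕ) : belief p r l ≤ p := by
  have hq : 0 ≤ r * (p - r) ^ l := mul_nonneg hr (pow_nonneg (sub_nonneg.mpr hrp) l)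
  rw [belief, div_le_iff₀ (by linarith)]
  nlinarith [mul_nonneg (sub_nonneg.mpr hrp) (sub_nonneg.mpr hp.le)]

theorem nat_mul_pow_le_belief (hr : 0 ≤ r) (hrp : r ≤ p) (hpr : p - r < 1) (l : ℕ) :
    l * (r * (p - r) ^ l) ≤ belief p r l := by
  rw [belief_eq_mul_geom_sum hpr.ne, mul_left_comm]
  gcongr
  calc (l : ℝ) * (p - r) ^ l = #(range l) • (p - r) ^ l := by rw [card_range, nsmul_eq_mul]
    _ ≤ ∑ j ∈ range l, (p - r) ^ j :=
        card_nsmul_le_sum _ _ _ fun j hj =>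
          pow_le_pow_of_le_one (sub_nonneg.mpr hrp) hpr.le (mem_range.mp hj).le

end belief

/-- Stability of the class-1 block of the linearized fluid dynamics of Whittle's
Index Policy: every complex root `λ` of the reduced characteristic polynomial `χ₁`
satisfies `|1+λ| < 1`. -/
theorem stmt_18 (p r : ℝ) (hr : 0 < r) (hrp : r < p) (hp : p < 1)
    (h : ℕ) (hh : 1 ≤ h)
    (b : ℕ → ℝ) (hb : ∀ l, b l = (r - r * (p - r) ^ l) / (1 + r - p))
    (χ₁ : ℂ → ℂ)
    (hχ₁ : ∀ l : ℂ, χ₁ l =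
      (l + (1 - (p : ℂ)) + (b h : ℂ)) * (1 + l) ^ (h - 1) -
        ((b (h + 1) : ℂ) - (b h : ℂ)) * (∑ j ∈ Finset.range (h - 1), (1 + l) ^ j)) :
    ∀ l : ℂ, χ₁ l = 0 → ‖1 + l‖ < 1 := by
  intro l hl
  obtain rfl : b = belief p r := funext hb
  have hq : p - r < 1 := by linarith
  have hc : belief p r (h + 1) - belief p r h = r * (p - r) ^ h := belief_succ_sub_belief hq.ne h
  have hc0 : 0 ≤ r * (p - r) ^ h := mul_nonneg hr.le (pow_nonneg (sub_nonneg.mpr hrp.le) h)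
  have hbp : 0 ≤ p - belief p r h := sub_nonneg.mpr (belief_le hr.le hrp.le hp h)
  apply norm_lt_one_of_sub_mul_pow_eq_mul_geom_sum
    (s := ((p - belief p r h : ℝ) : ℂ)) (c := ((r * (p - r) ^ h : ℝ) : ℂ))
  · rw [Complex.norm_real, Complex.norm_real, Real.norm_of_nonneg hc0, Real.norm_of_nonneg hbp,
      Nat.cast_sub hh, Nat.cast_one]
    linarith [nat_mul_pow_le_belief hr.le hrp.le hq h]
  · rw [← hc]
    push_cast
    linear_combination (hχ₁ l).symm.trans hl
end
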